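/- Let T and T' be two simplicial G-trees. Then T is a (possibly non-elementary) collapse of T' if and only if there exists a G-equivariant injection φ : E(T) → E(T') satisfying φ(ē) = φ(e)‾ which preserves alignment, in the sense that if oriented edges e₁, e₂, e₃ of T are aligned in this order, then φ(e₁), φ(e₂), φ(e₃) are aligned in this order in T'. -/

import Mathlib

set_option autoImplicit false
set_option maxHeartbeats 1000000
open scoped Classical

universe u

section Trees

variable (G : Type u) [Group G]

/-- A (minimal, simplicial) `G`-tree: a simplicial tree together with an action of `G` by
simplicial automorphisms, without inversions, admitting no proper invariant subtree. -/
structure GTree : Type (u + 1) where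
  V : Type u
  nonempty : Nonempty V
  graph : SimpleGraph V
  isTree : graph.IsTree
  act : G →* Equiv.Perm V
  adj_act : ∀ (g : G) (u v : V), graph.Adj u v → graph.Adj (act g u) (act g v)
  noInversion : ∀ (g : G) (u v : V), graph.Adj u v → ¬(act g u = v ∧ act g v = u)
  minimal : ∀ S : Set V, S.Nonempty → (∀ (g : G), ∀ v ∈ S, act g v ∈ S) →
      (∀ u ∈ S, ∀ v ∈ S, ∀ p : graph.Walk u v, p.IsPath → ∀ w ∈ p.support, w ∈ S) →
      S = Set.univ

variable {G}

namespace GTree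

variable (T : GTree G)

/-- The stabilizer of a vertex. -/
def stab (v : T.V) : Subgroup G where
  carrier := {g : G | T.act g v = v}
  one_mem' := by simp
  mul_mem' := by
    intro a b ha hb
    simp only [Set.mem_setOf_eq, map_mul, Equiv.Perm.mul_apply] at *
    rw [hb, ha]
  inv_mem' := by
    intro a ha
    simp only [Set.mem_setOf_eq] at *
    have h : T.act a⁻¹ (T.act a v) = v := by
      rw [← Equiv.Perm.mul_apply, ← map_mul, inv_mul_cancel, map_one, Equiv.Perm.one_apply]
    rwa [ha] at h

/-- The (pointwise) stabilizer of an edge `uv`; since the action has no inversions this is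
the full stabilizer of the edge. -/
def edgeStab (u v : T.V) : Subgroup G := T.stab u ⊓ T.stab v

/-- A subgroup of `G` is elliptic if it fixes a vertex. -/
def Elliptic (H : Subgroup G) : Prop := ∃ v : T.V, ∀ h ∈ H, T.act h v = v

/-- An element of `G` is elliptic if it fixes a vertex. -/
def EllipticElt (g : G) : Prop := ∃ v : T.V, T.act g v = v

/-- An element of `G` is hyperbolic if it fixes no vertex. -/
def Hyperbolic (g : G) : Prop := ∀ v : T.V, T.act g v ≠ v

/-- A `G`-tree is reduced if whenever the stabilizer of an edge `uv` equals the stabilizer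
of `u` (i.e. `G_u ≤ G_v`), the two endpoints are in the same orbit. -/
def Reduced : Prop :=
  ∀ u v : T.V, T.graph.Adj u v → T.stab u ≤ T.stab v → ∃ g : G, T.act g u = v

/-- `T` is a single point. -/
protected def Trivial : Prop := ∀ u v : T.V, u = v

/-- `T` is a (simplicial) line. -/
def IsLine : Prop := ∀ v : T.V, ∃ a b : T.V, a ≠ b ∧ {w : T.V | T.graph.Adj v w} = {a, b}

/-- `G` fixes an end of `T`: there is an equivariant choice, for each vertex, of the next
vertex in the direction of the fixed end. -/
def FixesEnd : Prop :=
  ∃ next : T.V → T.V, (∀ v, T.graph.Adj v (next v)) ∧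
    (∀ (g : G) (v : T.V), next (T.act g v) = T.act g (next v)) ∧
    (∀ v, next (next v) ≠ v)

/-- Linear abelian type: `T` is a line on which `G` acts by translations (every element acts
either trivially or freely). -/
def LinearAbelian : Prop :=
  T.IsLine ∧ ∀ g : G, (∀ v : T.V, T.act g v = v) ∨ (∀ v : T.V, T.act g v ≠ v)

/-- Dihedral type: `T` is a line and some element acts as a reflection. -/
def Dihedral : Prop :=
  T.IsLine ∧ ∃ g : G, (∃ v : T.V, T.act g v = v) ∧ (∃ w : T.V, T.act g w ≠ w)

/-- Genuine abelian type: `G` fixes an end and `T` is not a line. -/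
def GenuineAbelian : Prop := T.FixesEnd ∧ ¬T.IsLine

/-- Irreducibility, via the characterization by hyperbolicity of a commutator. -/
def Irred : Prop :=
  ∃ g h : G, T.Hyperbolic g ∧ T.Hyperbolic h ∧ T.Hyperbolic (g * h * g⁻¹ * h⁻¹)

/-- The image of a dart (oriented edge) under the action of `g`. -/
def dartAct (g : G) (d : T.graph.Dart) : T.graph.Dart :=
  ⟨(T.act g d.toProd.1, T.act g d.toProd.2), T.adj_act g d.toProd.1 d.toProd.2 d.adj⟩

/-- Three oriented edges are aligned (in this order) if some geodesic crosses them
successively, with the correct orientations. -/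
def Aligned (d₁ d₂ d₃ : T.graph.Dart) : Prop :=
  ∃ (u v : T.V) (p : T.graph.Walk u v), p.IsPath ∧ [d₁, d₂, d₃].Sublist p.darts

end GTree

/-- Two `G`-trees lie in the same deformation space iff they have the same elliptic
subgroups. -/
def SameDef (T T' : GTree G) : Prop := ∀ H : Subgroup G, T.Elliptic H ↔ T'.Elliptic H

/-- An equivariant isomorphism of simplicial `G`-trees. -/
def SimpIso (T T' : GTree G) : Prop :=
  ∃ e : T.V ≃ T'.V, (∀ (g : G) (v : T.V), e (T.act g v) = T'.act g (e v)) ∧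
    ∀ u v : T.V, T.graph.Adj u v ↔ T'.graph.Adj (e u) (e v)

end Trees
section Collapses

variable {G : Type u} [Group G]

/-- Two ordered pairs of adjacent vertices span edges in the same `G`-orbit
(as non-oriented edges). -/
def InEdgeOrbit (T : GTree G) (a b c d : T.V) : Prop :=
  ∃ g : G, (T.act g a = c ∧ T.act g b = d) ∨ (T.act g a = d ∧ T.act g b = c)

/-- `c` exhibits `T'` as a (possibly non-elementary) collapse of `T`: it is equivariant,
surjective, sends non-collapsed edges to edges, is onto the edges of `T'`, and its point
preimages are subtrees. -/
def IsCollapseMap (T T' : GTree G) (c : T.V → T'.V) : Prop :=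
  (∀ (g : G) (v : T.V), c (T.act g v) = T'.act g (c v)) ∧
  Function.Surjective c ∧
  (∀ u v : T.V, T.graph.Adj u v → c u ≠ c v → T'.graph.Adj (c u) (c v)) ∧
  (∀ u' v' : T'.V, T'.graph.Adj u' v' → ∃ u v : T.V, T.graph.Adj u v ∧ c u = u' ∧ c v = v') ∧
  (∀ u v : T.V, c u = c v → ∀ p : T.graph.Walk u v, p.IsPath → ∀ w ∈ p.support, c w = c u)

/-- `T'` is obtained from `T` by a (possibly non-elementary) collapse. -/
def CollapseOf (T' T : GTree G) : Prop := ∃ c : T.V → T'.V, IsCollapseMap T T' c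

/-- `T'` is obtained from `T` by collapsing (exactly) all the edges in the orbit of a
single edge. -/
def IsOrbitCollapse (T' T : GTree G) : Prop :=
  ∃ (c : T.V → T'.V) (u₀ v₀ : T.V), T.graph.Adj u₀ v₀ ∧ IsCollapseMap T T' c ∧
    ∀ u v : T.V, T.graph.Adj u v → (c u = c v ↔ InEdgeOrbit T u v u₀ v₀)

/-- An elementary collapse: collapsing the orbit of a collapsible edge, i.e. an orbit
collapse staying in the same deformation space. -/
def ElemCollapse (T T' : GTree G) : Prop := IsOrbitCollapse T' T ∧ SameDef T T'

/-- An elementary move: an elementary collapse or an elementary expansion. -/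
def ElemMove (T T' : GTree G) : Prop := ElemCollapse T T' ∨ ElemCollapse T' T

/-- An elementary deformation: a finite sequence of elementary collapses and expansions. -/
def ElemDeformation (T T' : GTree G) : Prop := Relation.ReflTransGen ElemMove T T'

/-- A slide move: an edge `f = vx` with `G_f ≤ G_e` slides across `e = vw` (and
equivariantly so does its orbit), becoming an edge `f' = wx`. -/
def SlideMove (T T' : GTree G) : Prop :=
  ∃ (e : T.V ≃ T'.V) (v w x : T.V),
    T.graph.Adj v w ∧ T.graph.Adj v x ∧ w ≠ x ∧
    T.edgeStab v x ≤ T.edgeStab v w ∧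
    ¬InEdgeOrbit T v w v x ∧
    (∀ (g : G) (u : T.V), e (T.act g u) = T'.act g (e u)) ∧
    (∀ a b : T.V, T'.graph.Adj (e a) (e b) ↔
      ((T.graph.Adj a b ∧ ¬InEdgeOrbit T a b v x) ∨ InEdgeOrbit T a b w x))

end Collapses

section MetricTrees

variable (G : Type u) [Group G]

/-- A metric `G`-tree: a simplicial `G`-tree together with an equivariant assignment of
positive lengths to the edges. -/
structure MGTree extends GTree G : Type (u + 1) where
  len : V → V → ℝ
  len_symm : ∀ u v : V, len u v = len v u
  len_pos : ∀ u v : V, graph.Adj u v → 0 < len u v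
  len_equivariant : ∀ (g : G) (u v : V), len (act g u) (act g v) = len u v

variable {G}

namespace MGTree

variable (T : MGTree G)

/-- The length of a walk. -/
noncomputable def walkLen {u v : T.V} (p : T.graph.Walk u v) : ℝ :=
  (p.darts.map fun d => T.len d.toProd.1 d.toProd.2).sum

/-- The distance between two vertices: the length of the unique reduced path joining them. -/
noncomputable def dist (u v : T.V) : ℝ :=
  sInf {x : ℝ | ∃ p : T.graph.Walk u v, p.IsPath ∧ x = T.walkLen p}

/-- The translation length of `g`. -/
noncomputable def ell (g : G) : ℝ :=
  sInf {x : ℝ | ∃ v : T.V, x = T.dist v (T.act g v)}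

/-- The axis (or characteristic set) of `g`: the set of points moved exactly `ℓ(g)`. -/
def Axis (g : G) : Set T.V := {v : T.V | T.dist v (T.act g v) = T.ell g}

/-- `T` is abelian: its length function is the absolute value of a homomorphism to `ℝ`
with cyclic image. -/
def IsAbelian : Prop :=
  ∃ φ : G → ℝ, (∀ g h : G, φ (g * h) = φ g + φ h) ∧
    (∃ a : ℝ, ∀ g : G, ∃ n : ℤ, φ g = (n : ℝ) * a) ∧
    ∀ g : G, T.ell g = |φ g|

/-- Irreducibility for metric trees: two hyperbolic elements with disjoint axes. -/
def Irr : Prop :=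
  ∃ g h : G, T.toGTree.Hyperbolic g ∧ T.toGTree.Hyperbolic h ∧ T.Axis g ∩ T.Axis h = ∅

end MGTree

/-- An equivariant simplicial isomorphism multiplying all edge lengths by `c`. -/
def EquivHomothety (c : ℝ) (T T' : MGTree G) : Prop :=
  ∃ e : T.V ≃ T'.V, (∀ (g : G) (v : T.V), e (T.act g v) = T'.act g (e v)) ∧
    (∀ u v : T.V, T.graph.Adj u v ↔ T'.graph.Adj (e u) (e v)) ∧
    ∀ u v : T.V, T.graph.Adj u v → T'.len (e u) (e v) = c * T.len u v

/-- An equivariant isometry of metric `G`-trees. -/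
def EquivIsometric (T T' : MGTree G) : Prop := EquivHomothety 1 T T'

/-- The action of an automorphism of `G` on metric `G`-trees, by precomposition. -/
def MGTree.precomp (φ : MulAut G) (T : MGTree G) : MGTree G where
  V := T.V
  nonempty := T.nonempty
  graph := T.graph
  isTree := T.isTree
  act := T.act.comp φ.toMonoidHom
  adj_act := fun g u v h => T.adj_act (φ g) u v h
  noInversion := fun g u v h => T.noInversion (φ g) u v h
  minimal := fun S h1 h2 h3 => T.minimal S h1
    (fun g v hv => by simpa using h2 (φ.symm g) v hv) h3
  len := T.len
  len_symm := T.len_symm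
  len_pos := T.len_pos
  len_equivariant := fun g u v => T.len_equivariant (φ g) u v

end MetricTrees
section Topologies

variable (G : Type u) [Group G]

/-- Basic Gromov–Hausdorff neighbourhood of the metric `G`-tree `T` determined by finite
sets `X ⊆ T`, `A ⊆ G` and `ε > 0`: the trees admitting an `ε`-approximate equivariant
lift of `X`. -/
def gromovBasic (T : MGTree G) (X : Finset T.V) (A : Finset G) (ε : ℝ) : Set (MGTree G) :=
  {T' : MGTree G | ∃ f : T.V → T'.V, ∀ x ∈ X, ∀ y ∈ X, ∀ g ∈ A,
    |T.dist x (T.act g y) - T'.dist (f x) (T'.act g (f y))| < ε}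

/-- The equivariant Gromov–Hausdorff topology on the space of metric `G`-trees. -/
noncomputable def gromovTop : TopologicalSpace (MGTree G) where
  IsOpen U := ∀ T ∈ U, ∃ (X : Finset T.V) (A : Finset G) (ε : ℝ), 0 < ε ∧
    gromovBasic G T X A ε ⊆ U
  isOpen_univ := fun T _ => ⟨∅, ∅, 1, one_pos, Set.subset_univ _⟩
  isOpen_inter := by
    intro U V hU hV T hT
    obtain ⟨X₁, A₁, ε₁, hε₁, h₁⟩ := hU T hT.1
    obtain ⟨X₂, A₂, ε₂, hε₂, h₂⟩ := hV T hT.2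
    refine ⟨X₁ ∪ X₂, A₁ ∪ A₂, min ε₁ ε₂, lt_min hε₁ hε₂, ?_⟩
    intro T' hT'
    obtain ⟨f, hf⟩ := hT'
    constructor
    · exact h₁ ⟨f, fun x hx y hy g hg =>
        lt_of_lt_of_le (hf x (Finset.mem_union_left _ hx) y (Finset.mem_union_left _ hy) g
          (Finset.mem_union_left _ hg)) (min_le_left _ _)⟩
    · exact h₂ ⟨f, fun x hx y hy g hg =>
        lt_of_lt_of_le (hf x (Finset.mem_union_right _ hx) y (Finset.mem_union_right _ hy) g
          (Finset.mem_union_right _ hg)) (min_le_right _ _)⟩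
  isOpen_sUnion := by
    intro s hs T hT
    obtain ⟨U, hUs, hTU⟩ := hT
    obtain ⟨X, A, ε, hε, h⟩ := hs U hUs T hTU
    exact ⟨X, A, ε, hε, h.trans (Set.subset_sUnion_of_mem hUs)⟩

variable {G}

/-- The closed cone of the (restricted) deformation space `D` spanned by `T`: the trees
of `D` obtained from trees having the same underlying simplicial tree as `T` by
(elementary) collapses. -/
def closedCone (D : Set (MGTree G)) (T : MGTree G) : Set (MGTree G) :=
  {T' : MGTree G | T' ∈ D ∧ CollapseOf T'.toGTree T.toGTree}

/-- The open cone containing `T`: the trees with the same underlying simplicial tree. -/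
def openCone (D : Set (MGTree G)) (T : MGTree G) : Set (MGTree G) :=
  {T' : MGTree G | T' ∈ D ∧ SimpIso T'.toGTree T.toGTree}

variable (G)

/-- The weak topology on a deformation space `D`: a set is closed if and only if its
intersection with every closed cone of `D` is closed (each closed cone carrying the
Gromov topology). -/
noncomputable def weakTop (D : Set (MGTree G)) : TopologicalSpace ↥D :=
  ⨆ (T : MGTree G) (_ : T ∈ D), TopologicalSpace.coinduced
    (fun x : {S : MGTree G // S ∈ closedCone D T} => (⟨x.1, x.2.1⟩ : ↥D))
    (TopologicalSpace.induced (fun x : {S : MGTree G // S ∈ closedCone D T} => x.1)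
      (gromovTop G))

variable {G}

/-- The projectivizing relation on a deformation space: agreement up to rescaling, i.e.
equivariant homothety. -/
def projRel (D : Set (MGTree G)) (a b : ↥D) : Prop :=
  ∃ c : ℝ, 0 < c ∧ EquivHomothety c a.1 b.1

/-- The relation of equivariant isometry on a deformation space. -/
def isomRel (D : Set (MGTree G)) (a b : ↥D) : Prop := EquivIsometric a.1 b.1

end Topologies

section Morphisms

variable {G : Type u} [Group G]

/-- A morphism of simplicial `G`-trees: an equivariant map sending each edge onto a
non-degenerate edge path (obtained by subdividing the edge into finitely many subsegments,
each mapped bijectively onto an edge). -/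
structure GMorphism (T T' : GTree G) where
  f : T.V → T'.V
  equivariant : ∀ (g : G) (v : T.V), f (T.act g v) = T'.act g (f v)
  edgeWalk : ∀ u v : T.V, T.graph.Adj u v → T'.graph.Walk (f u) (f v)
  edgeWalk_ne_nil : ∀ (u v : T.V) (h : T.graph.Adj u v), ¬(edgeWalk u v h).Nil
  edgeWalk_symm : ∀ (u v : T.V) (h : T.graph.Adj u v),
    (edgeWalk v u h.symm).support = (edgeWalk u v h).support.reverse
  edgeWalk_equivariant : ∀ (g : G) (u v : T.V) (h : T.graph.Adj u v),
    (edgeWalk (T.act g u) (T.act g v) (T.adj_act g u v h)).support =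
      (edgeWalk u v h).support.map (fun x => T'.act g x)

/-- `H` is bi-elliptic in `T`: it fixes two distinct points. -/
def BiElliptic (T : GTree G) (H : Subgroup G) : Prop :=
  ∃ u v : T.V, u ≠ v ∧ ∀ h ∈ H, T.act h u = u ∧ T.act h v = v

/-- `H` is a generalized edge group of `T`: it is squeezed between two edge stabilizers. -/
def GenEdgeGroup (T : GTree G) (H : Subgroup G) : Prop :=
  ∃ u v u' v' : T.V, T.graph.Adj u v ∧ T.graph.Adj u' v' ∧
    T.edgeStab u v ≤ H ∧ H ≤ T.edgeStab u' v'

/-- `H` belongs to `𝒜_min` (relative to the deformation space of `T₀`): it fixes an edge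
in every tree of the deformation space. -/
def Amin (T₀ : GTree G) (H : Subgroup G) : Prop :=
  ∀ T : GTree G, SameDef T₀ T → ∃ u v : T.V, T.graph.Adj u v ∧ H ≤ T.edgeStab u v

/-- A maximal elliptic subgroup (of the deformation space of `T₀`). -/
def MaxElliptic (T₀ : GTree G) (H : Subgroup G) : Prop :=
  T₀.Elliptic H ∧ ∀ K : Subgroup G, T₀.Elliptic K → H ≤ K → K = H

end Morphisms

section OutG

variable (G : Type u) [Group G]

instance innRange_normal : ((MulAut.conj : G →* MulAut G).range).Normal := by
  constructor
  intro a ha φ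
  obtain ⟨g, rfl⟩ := ha
  refine ⟨φ g, ?_⟩
  ext x
  simp only [MulAut.mul_apply, MulAut.conj_apply, map_mul, map_inv]
  simp [MulAut.inv_def]

/-- The outer automorphism group of `G`. -/
def OutG := MulAut G ⧸ (MulAut.conj : G →* MulAut G).range

noncomputable instance : Group (OutG G) := QuotientGroup.Quotient.group _

/-- The class of an automorphism in `Out(G)`. -/
def toOutG (φ : MulAut G) : OutG G := QuotientGroup.mk φ

end OutG
section RealTrees

variable (G : Type u) [Group G]

/-- A non-trivial minimal `ℝ`-tree with an isometric action of `G`: a geodesic metric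
space in which any two points are joined by a unique arc. -/
structure RGTree : Type (u + 1) where
  X : Type u
  [ms : MetricSpace X]
  nontrivial : Nontrivial X
  geodesic : ∀ x y : X, ∃ f : ℝ → X, f 0 = x ∧ f (dist x y) = y ∧
    ∀ s ∈ Set.Icc (0 : ℝ) (dist x y), ∀ t ∈ Set.Icc (0 : ℝ) (dist x y),
      dist (f s) (f t) = |s - t|
  unique_arc : ∀ (x y : X) (γ : Set.Icc (0 : ℝ) 1 → X), Continuous γ →
    Function.Injective γ → γ ⟨0, by constructor <;> norm_num⟩ = x →
    γ ⟨1, by constructor <;> norm_num⟩ = y →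
    ∀ z ∈ Set.range γ, dist x z + dist z y = dist x y
  act : G →* Equiv.Perm X
  isom : ∀ g : G, Isometry (act g)
  minimal : ∀ S : Set X, S.Nonempty → (∀ (g : G), ∀ x ∈ S, act g x ∈ S) →
    (∀ x ∈ S, ∀ y ∈ S, ∀ z : X, dist x z + dist z y = dist x y → z ∈ S) →
    S = Set.univ

attribute [instance] RGTree.ms

variable {G}

namespace RGTree

variable (R : RGTree G)

/-- `z` lies between `x` and `y` (i.e. on the arc from `x` to `y`). -/
def Btw (x z y : R.X) : Prop := dist x z + dist z y = dist x y

/-- A subgroup is elliptic if it fixes a point. -/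
def Elliptic (H : Subgroup G) : Prop := ∃ x : R.X, ∀ h ∈ H, R.act h x = x

/-- A hyperbolic element fixes no point. -/
def Hyperbolic (g : G) : Prop := ∀ x : R.X, R.act g x ≠ x

/-- The translation length of `g`. -/
noncomputable def ell (g : G) : ℝ :=
  sInf {r : ℝ | ∃ x : R.X, r = dist x (R.act g x)}

/-- The characteristic set of `g`: its axis if `g` is hyperbolic, its fixed point set
if `g` is elliptic. -/
def Axis (g : G) : Set R.X := {x : R.X | dist x (R.act g x) = R.ell g}

/-- The fixed point set of `g`. -/
def Fix (g : G) : Set R.X := {x : R.X | R.act g x = x}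

/-- The fixed point set of a subgroup. -/
def FixSub (H : Subgroup G) : Set R.X := {x : R.X | ∀ h ∈ H, R.act h x = x}

/-- Irreducibility: two hyperbolic elements with disjoint characteristic sets. -/
def Irr : Prop :=
  ∃ g h : G, R.Hyperbolic g ∧ R.Hyperbolic h ∧ R.Axis g ∩ R.Axis h = ∅

/-- The distance between the characteristic sets of `g` and `h`. -/
noncomputable def axesDist (g h : G) : ℝ :=
  sInf {r : ℝ | ∃ x ∈ R.Axis g, ∃ y ∈ R.Axis h, r = dist x y}

end RGTree

/-- `f` realizes the metric simplicial `G`-tree `T` inside the `ℝ`-tree `R`. -/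
def IsRealizationMap (R : RGTree G) (T : MGTree G) (f : T.V → R.X) : Prop :=
  (∀ (g : G) (v : T.V), f (T.act g v) = R.act g (f v)) ∧
  (∀ u v : T.V, dist (f u) (f v) = T.dist u v) ∧
  ∀ x : R.X, ∃ u v : T.V, T.graph.Adj u v ∧ R.Btw (f u) x (f v)

/-- The `ℝ`-tree `R` is (equivariantly isometric to) the geometric realization of the
metric simplicial `G`-tree `T`. -/
def RealizationOf (R : RGTree G) (T : MGTree G) : Prop := ∃ f : T.V → R.X, IsRealizationMap R T f

variable (G)

/-- The equivariant Gromov–Hausdorff topology on the space of `ℝ`-trees. -/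
noncomputable def gromovTopR : TopologicalSpace (RGTree G) where
  IsOpen U := ∀ R ∈ U, ∃ (X : Finset R.X) (A : Finset G) (ε : ℝ), 0 < ε ∧
    {R' : RGTree G | ∃ f : R.X → R'.X, ∀ x ∈ X, ∀ y ∈ X, ∀ g ∈ A,
      |dist x (R.act g y) - dist (f x) (R'.act g (f y))| < ε} ⊆ U
  isOpen_univ := fun R _ => ⟨∅, ∅, 1, one_pos, Set.subset_univ _⟩
  isOpen_inter := by
    intro U V hU hV R hR
    obtain ⟨X₁, A₁, ε₁, hε₁, h₁⟩ := hU R hR.1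
    obtain ⟨X₂, A₂, ε₂, hε₂, h₂⟩ := hV R hR.2
    refine ⟨X₁ ∪ X₂, A₁ ∪ A₂, min ε₁ ε₂, lt_min hε₁ hε₂, ?_⟩
    rintro R' ⟨f, hf⟩
    constructor
    · exact h₁ ⟨f, fun x hx y hy g hg =>
        lt_of_lt_of_le (hf x (Finset.mem_union_left _ hx) y (Finset.mem_union_left _ hy) g
          (Finset.mem_union_left _ hg)) (min_le_left _ _)⟩
    · exact h₂ ⟨f, fun x hx y hy g hg =>
        lt_of_lt_of_le (hf x (Finset.mem_union_right _ hx) y (Finset.mem_union_right _ hy) g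
          (Finset.mem_union_right _ hg)) (min_le_right _ _)⟩
  isOpen_sUnion := by
    intro s hs R hR
    obtain ⟨U, hUs, hRU⟩ := hR
    obtain ⟨X, A, ε, hε, h⟩ := hs U hUs R hRU
    exact ⟨X, A, ε, hε, h.trans (Set.subset_sUnion_of_mem hUs)⟩

/-- The axes topology: the coarsest topology making all translation length functions
continuous. -/
noncomputable def axesTopR : TopologicalSpace (RGTree G) :=
  TopologicalSpace.induced (fun (R : RGTree G) (g : G) => R.ell g) Pi.topologicalSpace

variable {G}

/-- A morphism of `ℝ`-trees: an equivariant map such that every segment is a finite union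
of subsegments on each of which the map is isometric. -/
structure RMorphism (R S : RGTree G) where
  f : R.X → S.X
  equivariant : ∀ (g : G) (x : R.X), f (R.act g x) = S.act g (f x)
  piecewise : ∀ x y : R.X, ∃ (n : ℕ) (c : Fin (n + 1) → R.X),
    c 0 = x ∧ c (Fin.last n) = y ∧ (∀ i : Fin (n + 1), R.Btw x (c i) y) ∧
    ∀ i : Fin n, ∀ p q : R.X, R.Btw (c i.castSucc) p (c i.succ) →
      R.Btw (c i.castSucc) q (c i.succ) → dist (f p) (f q) = dist p q

/-- `M` is the intermediate tree at time `t` of Skora's deformation of the morphism `φ`: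
the quotient of the source in which `x` and `y` are identified exactly when `φ` maps the
segment `[x,y]` into the ball of radius `t` around `φ(x) = φ(y)`. -/
def IsSkoraIntermediate {R S : RGTree G} (φ : RMorphism R S) (t : ℝ) (M : RGTree G) : Prop :=
  ∃ (p : R.X → M.X) (q : M.X → S.X), Function.Surjective p ∧
    (∀ (g : G) (x : R.X), p (R.act g x) = M.act g (p x)) ∧
    (∀ (g : G) (m : M.X), q (M.act g m) = S.act g (q m)) ∧
    (∀ x : R.X, q (p x) = φ.f x) ∧
    (∀ x y : R.X, dist (p x) (p y) ≤ dist x y) ∧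
    (∀ m m' : M.X, dist (q m) (q m') ≤ dist m m') ∧
    ∀ x y : R.X, p x = p y ↔ (φ.f x = φ.f y ∧
      ∀ z : R.X, R.Btw x z y → dist (φ.f z) (φ.f x) ≤ t)

/-- `P` is the basepoint of `R` determined by `g` and `h` (the endpoint of the
intersection of the two characteristic sets, resp. the projection of one onto the other),
characterized by the metric system (1) of [Guirardel–Levitt]. -/
noncomputable def IsBasepoint (R : RGTree G) (g h : G) (P : R.X) : Prop :=
  dist P (R.act g P) = R.ell g ∧
  dist P (R.act h P) = R.ell h + 2 * R.axesDist g h ∧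
  dist (R.act g P) (R.act h P) = R.ell g + R.ell h + 2 * R.axesDist g h ∧
  dist (R.act g P) (R.act h⁻¹ P) = R.ell g + R.ell h + 2 * R.axesDist g h

/-- `p` is a projection of `x` to the set `S` (a closest point of `S`). -/
def IsProj (R : RGTree G) (x : R.X) (S : Set R.X) (p : R.X) : Prop :=
  p ∈ S ∧ ∀ q ∈ S, dist x p ≤ dist x q

/-- Equivariant isometry of `ℝ`-trees. -/
def RIsom (R R' : RGTree G) : Prop :=
  ∃ e : R.X ≃ R'.X, (∀ (g : G) (x : R.X), e (R.act g x) = R'.act g (e x)) ∧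
    ∀ x y : R.X, dist (e x) (e y) = dist x y

/-- Equivariant homothety of `ℝ`-trees, with ratio `c`. -/
def RHomothety (c : ℝ) (R R' : RGTree G) : Prop :=
  ∃ e : R.X ≃ R'.X, (∀ (g : G) (x : R.X), e (R.act g x) = R'.act g (e x)) ∧
    ∀ x y : R.X, dist (e x) (e y) = c * dist x y

end RealTrees
section MoreDefs

variable {G : Type u} [Group G]

/-- `H` is contained in a conjugate of `K`. -/
def ConjLe (H K : Subgroup G) : Prop := ∃ g : G, ∀ h ∈ H, g * h * g⁻¹ ∈ K

/-- `H` represents a maximal element of the vertical set `ℳ` associated to the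
deformation space of `T₀`. -/
def MaxVert (T₀ : GTree G) (H : Subgroup G) : Prop :=
  T₀.Elliptic H ∧ ∀ K : Subgroup G, T₀.Elliptic K → ConjLe H K → ConjLe K H

/-- The vertical set `ℳ`: equivalence classes of maximal elements for containment in a
conjugate, among elliptic subgroups. -/
def vertSet (T₀ : GTree G) : Type u :=
  Quot (fun H K : {H : Subgroup G // MaxVert T₀ H} => ConjLe H.1 K.1 ∧ ConjLe K.1 H.1)

namespace GTree

variable (T : GTree G)

/-- The set of `G`-orbits of vertices (the vertices of the quotient graph `T/G`). -/
def vertexOrbits : Type u := Quot (fun u v : T.V => ∃ g : G, T.act g u = v)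

/-- Orbits of neighbours of `v` under the stabilizer of `v`: the oriented edges of the
quotient graph of groups issued from the image of `v`, whose number is the valence of
the image of `v`. -/
def nbrOrbits (v : T.V) : Type u :=
  Quot (fun a b : {w : T.V // T.graph.Adj v w} => ∃ g : G, T.act g v = v ∧ T.act g a.1 = b.1)

/-- The set of `G`-orbits of (non-oriented) edges. -/
def edgeOrbits : Type u :=
  Quot (fun d d' : T.graph.Dart => ∃ g : G, T.dartAct g d = d' ∨ T.dartAct g d = d'.symm)

/-- BF-reduced: if an edge-to-vertex inclusion `G_e → G_u` is onto, then the image of `u`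
in the quotient graph has valence at least 3. -/
def BFReduced : Prop :=
  ∀ u w : T.V, T.graph.Adj u w → T.stab u ≤ T.stab w →
    3 ≤ Cardinal.mk (T.nbrOrbits u)

end GTree

/-- The quotient graph of groups of `T` has a strict ascending loop: an edge whose
endpoints are in the same orbit, exactly one of the two edge-to-vertex inclusions
being onto. -/
def HasSAL (T : GTree G) : Prop :=
  ∃ u v : T.V, T.graph.Adj u v ∧ (∃ g : G, T.act g u = v) ∧
    Xor' (T.stab u ≤ T.stab v) (T.stab v ≤ T.stab u)

/-- The edge (orbit of) `uv` is a surviving edge: `T` can be made reduced by a collapse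
(within its deformation space) not collapsing `uv`. -/
def Surviving (T : GTree G) (u v : T.V) : Prop :=
  ∃ (T' : GTree G) (c : T.V → T'.V), IsCollapseMap T T' c ∧ SameDef T T' ∧
    T'.Reduced ∧ c u ≠ c v

/-- Containment in a conjugate by an element of `G₀`. -/
def perLe (G₀ : Subgroup G) (H K : Subgroup G) : Prop :=
  ∃ g ∈ G₀, ∀ h ∈ H, g * h * g⁻¹ ∈ K

/-- `H` represents a maximal element of the peripheral structure `ℳ₀` of `G₀`. -/
def PeriphMax (T₀ : GTree G) (G₀ : Subgroup G) (H : Subgroup G) : Prop :=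
  H ≤ G₀ ∧ Amin T₀ H ∧
    ∀ K : Subgroup G, K ≤ G₀ → Amin T₀ K → perLe G₀ H K → perLe G₀ K H

/-- The peripheral structure `ℳ₀` of `G₀`, as a set of equivalence classes. -/
def periphSet (T₀ : GTree G) (G₀ : Subgroup G) : Type u :=
  Quot (fun H K : {H : Subgroup G // PeriphMax T₀ G₀ H} =>
    perLe G₀ H.1 K.1 ∧ perLe G₀ K.1 H.1)

end MoreDefs

/-!
Both directions go through half-trees: for an oriented edge `d` of a tree, `HeadSide d x` says
that `x` lies beyond `d`, i.e. the geodesic from the tail of `d` to `x` crosses `d`.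

If `c : T' → T` is a collapse, its fibres are subtrees, so every edge of `T` has exactly one
preimage edge in `T'`; this is `φ`. Lifting a geodesic of `T` edge by edge and joining
consecutive lifts inside fibres gives a geodesic of `T'` crossing the lifts in order.

Conversely, given `φ`, every vertex `x'` of `T'` orients the edges of `T`: `d` points towards
`x'` if `x'` lies beyond `φ d`. Since `φ` preserves aligned pairs, this orientation is
coherent, and a dart pointing towards `x'` whose image has its head closest to `x'` ends at a
sink. A coherent orientation with a sink `v` points every edge towards `v`, so `x' ↦ v` is well
defined; it is the collapse map. Preservation of aligned triples gives preservation of aligned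
pairs because, `T` being minimal, every path of `T` extends by one edge.
-/

namespace SimpleGraph

variable {V V' : Type*} {Γ : SimpleGraph V} {Γ' : SimpleGraph V'}

def AlignedPair (d₁ d₂ : Γ.Dart) : Prop :=
  ∃ (a b : V) (p : Γ.Walk a b), p.IsPath ∧ [d₁, d₂].Sublist p.darts

lemma AlignedPair.ne {d₁ d₂ : Γ.Dart} (h : AlignedPair d₁ d₂) : d₁ ≠ d₂ := by
  obtain ⟨a, b, p, hp, hsub⟩ := h
  simpa using hsub.nodup (Walk.darts_nodup_of_support_nodup hp.support_nodup)

lemma alignedPair_of_snd_eq_fst {d d' : Γ.Dart} (hc : d.snd = d'.fst) (hne : d' ≠ d.symm) :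
    AlignedPair d d' := by
  obtain ⟨⟨a, b⟩, hab⟩ := d
  obtain ⟨⟨b', c⟩, hbc⟩ := d'
  obtain rfl : b = b' := hc
  have hac : a ≠ c := by
    rintro rfl
    exact hne rfl
  refine ⟨a, c, .cons hab (.cons hbc .nil), ?_, by simp⟩
  simp [Walk.cons_isPath_iff, hab.ne, hac, hbc.ne]

namespace Walk

lemma adj_or_exists_sublist_darts {u v : V} (p : Γ.Walk u v) (hne : u ≠ v) :
    Γ.Adj u v ∨ ∃ d₁ d₂ : Γ.Dart, [d₁, d₂].Sublist p.darts := by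
  match p with
  | nil => exact absurd rfl hne
  | cons h nil => exact .inl h
  | cons _ (cons _ _) => exact .inr ⟨_, _, ((List.nil_sublist _).cons_cons _).cons_cons _⟩

lemma fst_eq_or_exists_sublist_darts {u v : V} (p : Γ.Walk u v) {d : Γ.Dart}
    (hd : d ∈ p.darts) : d.fst = u ∨ ∃ d₀ : Γ.Dart, d₀.fst = u ∧ [d₀, d].Sublist p.darts := by
  cases p with
  | nil => simp at hd
  | cons h q =>
    rw [darts_cons, List.mem_cons] at hd
    rcases hd with rfl | hd
    · exact .inl rfl
    · exact .inr ⟨_, rfl, (List.singleton_sublist.mpr hd).cons_cons _⟩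

lemma exists_append_of_sublist_darts {u v : V} (p : Γ.Walk u v) {d₁ d₂ : Γ.Dart}
    (h : [d₁, d₂].Sublist p.darts) : ∃ (z : V) (q : Γ.Walk u z) (r : Γ.Walk z v),
      p = q.append r ∧ d₁ ∈ q.darts ∧ d₂ ∈ r.darts := by
  induction p with
  | nil => simp at h
  | cons hadj p ih =>
    rw [darts_cons] at h
    cases h with
    | cons _ h =>
      obtain ⟨z, q, r, rfl, h₁, h₂⟩ := ih h
      exact ⟨z, .cons hadj q, r, rfl, by simp [h₁], h₂⟩
    | cons_cons _ h => exact ⟨_, .cons hadj .nil, p, rfl, by simp, List.singleton_sublist.mp h⟩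

lemma exists_adj_adj_ne_of_mem_support {u v w : V} {p : Γ.Walk u v} (hp : p.IsPath)
    (hw : w ∈ p.support) (hwu : w ≠ u) (hwv : w ≠ v) :
    ∃ w₁ w₂ : V, Γ.Adj w w₁ ∧ Γ.Adj w w₂ ∧ w₁ ≠ w₂ := by
  obtain ⟨q, r, -, -, rfl⟩ := hp.mem_support_iff_exists_append.mp hw
  have hq : ¬q.Nil := not_nil_of_ne hwu.symm
  have hr : ¬r.Nil := not_nil_of_ne hwv
  refine ⟨q.penultimate, r.snd, (adj_penultimate hq).symm, adj_snd hr, ?_⟩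
  exact hp.ne_of_mem_support_of_append (adj_snd hr).ne'
    (List.dropLast_subset _ (penultimate_mem_dropLast_support hq))
    (List.mem_of_mem_tail (snd_mem_tail_support hr))

end Walk

namespace IsTree

variable (hΓ : Γ.IsTree)

noncomputable def geodesic (a b : V) : Γ.Walk a b :=
  (hΓ.existsUnique_path a b).choose

lemma isPath_geodesic (a b : V) : (hΓ.geodesic a b).IsPath :=
  (hΓ.existsUnique_path a b).choose_spec.1

lemma eq_geodesic {a b : V} {p : Γ.Walk a b} (hp : p.IsPath) : p = hΓ.geodesic a b :=
  (hΓ.existsUnique_path a b).choose_spec.2 p hp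

lemma geodesic_self (a : V) : hΓ.geodesic a a = .nil :=
  (hΓ.eq_geodesic .nil).symm

lemma geodesic_of_adj {a b : V} (h : Γ.Adj a b) : hΓ.geodesic a b = .cons h .nil :=
  (hΓ.eq_geodesic (Walk.IsPath.of_adj h)).symm

lemma mem_support_geodesic_comm {a b z : V} :
    z ∈ (hΓ.geodesic a b).support ↔ z ∈ (hΓ.geodesic b a).support := by
  rw [← hΓ.eq_geodesic (hΓ.isPath_geodesic a b).reverse, Walk.support_reverse, List.mem_reverse]

lemma eq_geodesic_append_geodesic {a b z : V} {p : Γ.Walk a b} (hp : p.IsPath)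
    (hz : z ∈ p.support) : p = (hΓ.geodesic a z).append (hΓ.geodesic z b) := by
  obtain ⟨q, r, hq, hr, rfl⟩ := hp.mem_support_iff_exists_append.mp hz
  rw [← hΓ.eq_geodesic hq, ← hΓ.eq_geodesic hr]

lemma geodesic_map (hΓ' : Γ'.IsTree) (f : Γ →g Γ') (hf : Function.Injective f) (a b : V) :
    hΓ'.geodesic (f a) (f b) = (hΓ.geodesic a b).map f :=
  (hΓ'.eq_geodesic ((hΓ.isPath_geodesic a b).map hf)).symm

def HeadSide (d : Γ.Dart) (x : V) : Prop :=
  d.snd ∈ (hΓ.geodesic d.fst x).support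

lemma headSide_iff_fst_notMem (d : Γ.Dart) (x : V) :
    hΓ.HeadSide d x ↔ d.fst ∉ (hΓ.geodesic d.snd x).support := by
  constructor
  · intro h hfst
    have hp := hΓ.isPath_geodesic d.fst x
    rw [hΓ.eq_geodesic_append_geodesic hp h] at hp
    exact hp.ne_of_mem_support_of_append d.adj.ne (Walk.start_mem_support _) hfst rfl
  · intro h
    rw [HeadSide, ← hΓ.eq_geodesic ((hΓ.isPath_geodesic d.snd x).cons (h := d.adj) h)]
    simp

lemma headSide_symm_iff (d : Γ.Dart) (x : V) : hΓ.HeadSide d.symm x ↔ ¬hΓ.HeadSide d x :=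
  hΓ.headSide_iff_fst_notMem d.symm x

lemma headSide_snd (d : Γ.Dart) : hΓ.HeadSide d d.snd := by
  simp [HeadSide, hΓ.geodesic_of_adj d.adj]

lemma not_headSide_fst (d : Γ.Dart) : ¬hΓ.HeadSide d d.fst := by
  simp [HeadSide, hΓ.geodesic_self, d.adj.ne']

lemma headSide_mapDart_iff (hΓ' : Γ'.IsTree) (f : Γ →g Γ') (hf : Function.Injective f)
    (d : Γ.Dart) (x : V) : hΓ'.HeadSide (f.mapDart d) (f x) ↔ hΓ.HeadSide d x := by
  show f d.snd ∈ (hΓ'.geodesic (f d.fst) (f x)).support ↔ _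
  rw [hΓ.geodesic_map hΓ' f hf, Walk.support_map, List.mem_map_of_injective hf]
  rfl

lemma headSide_of_mem_support_geodesic {d : Γ.Dart} {x z : V} (hx : hΓ.HeadSide d x)
    (hz : z ∈ (hΓ.geodesic d.snd x).support) : hΓ.HeadSide d z := by
  rw [hΓ.headSide_iff_fst_notMem] at hx ⊢
  rw [hΓ.eq_geodesic_append_geodesic (hΓ.isPath_geodesic d.snd x) hz,
    Walk.mem_support_append_iff] at hx
  exact fun h => hx (.inl h)

lemma geodesic_eq_append_cons {d : Γ.Dart} {a b : V} (ha : ¬hΓ.HeadSide d a)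
    (hb : hΓ.HeadSide d b) :
    hΓ.geodesic a b = (hΓ.geodesic a d.fst).append (.cons d.adj (hΓ.geodesic d.snd b)) := by
  refine (hΓ.eq_geodesic ?_).symm
  rw [Walk.isPath_def, Walk.support_append, Walk.support_cons, List.tail_cons, List.nodup_append]
  refine ⟨(hΓ.isPath_geodesic _ _).support_nodup, (hΓ.isPath_geodesic _ _).support_nodup, ?_⟩
  rintro z hz _ hz' rfl
  rw [hΓ.mem_support_geodesic_comm] at hz
  rw [← hΓ.headSide_symm_iff] at ha
  exact (hΓ.headSide_symm_iff d z).mp (hΓ.headSide_of_mem_support_geodesic ha hz)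
    (hΓ.headSide_of_mem_support_geodesic hb hz')

lemma mem_darts_geodesic {d : Γ.Dart} {a b : V} (ha : ¬hΓ.HeadSide d a)
    (hb : hΓ.HeadSide d b) : d ∈ (hΓ.geodesic a b).darts := by
  rw [hΓ.geodesic_eq_append_cons ha hb]
  simp

lemma snd_mem_support_geodesic {d : Γ.Dart} {a b : V} (ha : ¬hΓ.HeadSide d a)
    (hb : hΓ.HeadSide d b) : d.snd ∈ (hΓ.geodesic a b).support :=
  Walk.dart_snd_mem_support_of_mem_darts _ (hΓ.mem_darts_geodesic ha hb)

lemma length_geodesic_snd_lt {d : Γ.Dart} {a b : V} (ha : ¬hΓ.HeadSide d a)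
    (hb : hΓ.HeadSide d b) : (hΓ.geodesic d.snd b).length < (hΓ.geodesic a b).length := by
  rw [hΓ.geodesic_eq_append_cons ha hb, Walk.length_append, Walk.length_cons]
  omega

lemma eq_of_adj_of_not_headSide_of_headSide {d : Γ.Dart} {a b : V} (h : Γ.Adj a b)
    (ha : ¬hΓ.HeadSide d a) (hb : hΓ.HeadSide d b) : d = ⟨(a, b), h⟩ := by
  have hlen := congrArg Walk.length (hΓ.geodesic_eq_append_cons ha hb)
  rw [hΓ.geodesic_of_adj h, Walk.length_append, Walk.length_cons, Walk.length_cons,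
    Walk.length_nil] at hlen
  have h₁ := Walk.eq_of_length_eq_zero (p := hΓ.geodesic a d.fst) (by omega)
  have h₂ := Walk.eq_of_length_eq_zero (p := hΓ.geodesic d.snd b) (by omega)
  ext <;> simp [h₁, h₂]

lemma headSide_of_mem_support {d : Γ.Dart} {x y w : V} (hx : hΓ.HeadSide d x)
    (hy : hΓ.HeadSide d y) {p : Γ.Walk x y} (hp : p.IsPath) (hw : w ∈ p.support) :
    hΓ.HeadSide d w := by
  by_contra hdw
  have hx' := hΓ.mem_support_geodesic_comm.mp (hΓ.snd_mem_support_geodesic hdw hx)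
  have hne : d.snd ≠ w := fun h => hdw (h ▸ hΓ.headSide_snd d)
  rw [hΓ.eq_geodesic_append_geodesic hp hw] at hp
  exact hp.ne_of_mem_support_of_append hne hx' (hΓ.snd_mem_support_geodesic hdw hy) rfl

lemma headSide_of_mem_darts {a b : V} {p : Γ.Walk a b} (hp : p.IsPath) {d : Γ.Dart}
    (hd : d ∈ p.darts) : hΓ.HeadSide d b := by
  induction p with
  | nil => simp at hd
  | cons h q ih =>
    rw [Walk.darts_cons, List.mem_cons] at hd
    rcases hd with rfl | hd
    · rw [HeadSide, ← hΓ.eq_geodesic hp]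
      simp
    · exact ih hp.of_cons hd

lemma not_headSide_of_mem_darts {a b : V} {p : Γ.Walk a b} (hp : p.IsPath) {d : Γ.Dart}
    (hd : d ∈ p.darts) : ¬hΓ.HeadSide d a := by
  rw [← hΓ.headSide_symm_iff]
  exact hΓ.headSide_of_mem_darts hp.reverse (Walk.mem_darts_reverse.mpr hd)

lemma exists_headSide_of_ne {v w : V} (hne : v ≠ w) :
    ∃ d : Γ.Dart, ¬hΓ.HeadSide d v ∧ hΓ.HeadSide d w := by
  have hd := Walk.firstDart_mem_darts (Walk.not_nil_of_ne (p := hΓ.geodesic v w) hne)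
  exact ⟨_, hΓ.not_headSide_of_mem_darts (hΓ.isPath_geodesic v w) hd,
    hΓ.headSide_of_mem_darts (hΓ.isPath_geodesic v w) hd⟩

lemma eq_of_forall_headSide_iff {v w : V}
    (h : ∀ d : Γ.Dart, hΓ.HeadSide d v ↔ hΓ.HeadSide d w) : v = w := by
  by_contra hne
  obtain ⟨d, hv, hw⟩ := hΓ.exists_headSide_of_ne hne
  exact hv ((h d).mpr hw)

lemma headSide_of_append {a b z : V} {q : Γ.Walk a z} {r : Γ.Walk z b}
    (hp : (q.append r).IsPath) {d : Γ.Dart} (hd : d ∈ q.darts) {y : V} (hy : y ∈ r.support) :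
    hΓ.HeadSide d y := by
  obtain ⟨r₁, r₂, -, -, rfl⟩ := Walk.mem_support_iff_exists_append.mp hy
  rw [Walk.append_assoc] at hp
  exact hΓ.headSide_of_mem_darts hp.of_append_left (by simp [hd])

lemma not_headSide_of_append {a b z : V} {q : Γ.Walk a z} {r : Γ.Walk z b}
    (hp : (q.append r).IsPath) {d : Γ.Dart} (hd : d ∈ r.darts) {y : V} (hy : y ∈ q.support) :
    ¬hΓ.HeadSide d y := by
  rw [← hΓ.headSide_symm_iff]
  rw [← Walk.isPath_reverse_iff, Walk.reverse_append] at hp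
  exact hΓ.headSide_of_append hp (Walk.mem_darts_reverse.mpr (by simpa using hd))
    (by simpa using hy)

lemma headSide_fst_of_alignedPair {d₁ d₂ : Γ.Dart} (h : AlignedPair d₁ d₂) :
    hΓ.HeadSide d₁ d₂.fst := by
  obtain ⟨a, b, p, hp, hsub⟩ := h
  obtain ⟨z, q, r, rfl, h₁, h₂⟩ := p.exists_append_of_sublist_darts hsub
  exact hΓ.headSide_of_append hp h₁ (r.dart_fst_mem_support_of_mem_darts h₂)

lemma not_headSide_fst_of_alignedPair {d₁ d₂ : Γ.Dart} (h : AlignedPair d₁ d₂) :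
    ¬hΓ.HeadSide d₂ d₁.fst := by
  obtain ⟨a, b, p, hp, hsub⟩ := h
  obtain ⟨z, q, r, rfl, h₁, h₂⟩ := p.exists_append_of_sublist_darts hsub
  exact hΓ.not_headSide_of_append hp h₂ (q.dart_fst_mem_support_of_mem_darts h₁)

lemma not_headSide_snd_of_alignedPair {d₁ d₂ : Γ.Dart} (h : AlignedPair d₁ d₂) :
    ¬hΓ.HeadSide d₂ d₁.snd := by
  obtain ⟨a, b, p, hp, hsub⟩ := h
  obtain ⟨z, q, r, rfl, h₁, h₂⟩ := p.exists_append_of_sublist_darts hsub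
  exact hΓ.not_headSide_of_append hp h₂ (q.dart_snd_mem_support_of_mem_darts h₁)

lemma headSide_of_alignedPair {d₁ d₂ : Γ.Dart} (h : AlignedPair d₁ d₂) {x : V}
    (hx : hΓ.HeadSide d₂ x) : hΓ.HeadSide d₁ x := by
  rw [HeadSide, hΓ.geodesic_eq_append_cons (hΓ.not_headSide_fst_of_alignedPair h) hx,
    Walk.mem_support_append_iff]
  exact .inl (hΓ.headSide_fst_of_alignedPair h)

lemma iff_headSide_of_sink {O : Γ.Dart → Prop} (hsymm : ∀ d, O d.symm ↔ ¬O d)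
    (hcoh : ∀ d₁ d₂, AlignedPair d₁ d₂ → O d₂ → O d₁) {v : V}
    (hv : ∀ d : Γ.Dart, d.fst = v → ¬O d) (d : Γ.Dart) : O d ↔ hΓ.HeadSide d v := by
  have key : ∀ d, ¬hΓ.HeadSide d v → ¬O d := by
    intro d hd hO
    have hmem := hΓ.mem_darts_geodesic hd (hΓ.headSide_snd d)
    rcases (hΓ.geodesic v d.snd).fst_eq_or_exists_sublist_darts hmem with h | ⟨d₀, h₀, hsub⟩
    · exact hv d h hO
    · exact hv d₀ h₀ (hcoh d₀ d ⟨_, _, _, hΓ.isPath_geodesic _ _, hsub⟩ hO)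
  refine ⟨fun hO => not_not.mp fun h => key d h hO, fun h => not_not.mp fun hO => ?_⟩
  exact key d.symm (by rwa [hΓ.headSide_symm_iff, not_not]) ((hsymm d).mpr hO)

end IsTree

structure AlignedDartMap (Γ : SimpleGraph V) (Γ' : SimpleGraph V') where
  toFun : Γ.Dart → Γ'.Dart
  map_symm : ∀ d, toFun d.symm = (toFun d).symm
  map_alignedPair : ∀ d₁ d₂, AlignedPair d₁ d₂ → AlignedPair (toFun d₁) (toFun d₂)

namespace AlignedDartMap

instance : CoeFun (AlignedDartMap Γ Γ') (fun _ => Γ.Dart → Γ'.Dart) := ⟨toFun⟩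

variable (φ : AlignedDartMap Γ Γ') (hΓ' : Γ'.IsTree)

lemma headSide_map_iff_of_sink (hΓ : Γ.IsTree) {x' : V'} {v : V}
    (hv : ∀ d : Γ.Dart, d.fst = v → ¬hΓ'.HeadSide (φ d) x') (d : Γ.Dart) :
    hΓ'.HeadSide (φ d) x' ↔ hΓ.HeadSide d v :=
  hΓ.iff_headSide_of_sink (O := fun d => hΓ'.HeadSide (φ d) x')
    (fun d => by simp only [φ.map_symm, hΓ'.headSide_symm_iff])
    (fun _ _ h => hΓ'.headSide_of_alignedPair (φ.map_alignedPair _ _ h)) hv d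

/-- A dart `d` with `x'` beyond `φ d` and `(φ d).snd` closest to `x'` ends at a sink: a dart
`d'` leaving `d.snd` towards `x'` would continue `d`, so `(φ d').snd` would be closer. -/
lemma exists_sink [Nonempty V] (x' : V') :
    ∃ v : V, ∀ d : Γ.Dart, d.fst = v → ¬hΓ'.HeadSide (φ d) x' := by
  by_cases hO : ∃ d, hΓ'.HeadSide (φ d) x'
  · obtain ⟨d, hd, hmin⟩ := (measure fun d => (hΓ'.geodesic (φ d).snd x').length).wf.has_min
      {d | hΓ'.HeadSide (φ d) x'} hO
    refine ⟨d.snd, fun d' hd' hO' => hmin d' hO' ?_⟩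
    have hne : d' ≠ d.symm := by
      rintro rfl
      exact (hΓ'.headSide_symm_iff (φ d) x').mp (φ.map_symm d ▸ hO') hd
    have hpair := φ.map_alignedPair _ _ (alignedPair_of_snd_eq_fst hd'.symm hne)
    exact hΓ'.length_geodesic_snd_lt (hΓ'.not_headSide_snd_of_alignedPair hpair) hO'
  · exact ⟨Classical.arbitrary V, fun d _ hd => hO ⟨d, hd⟩⟩

variable [Nonempty V]

noncomputable def collapseMap (x' : V') : V := (φ.exists_sink hΓ' x').choose

lemma headSide_collapseMap_iff (hΓ : Γ.IsTree) (x' : V') (d : Γ.Dart) :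
    hΓ.HeadSide d (φ.collapseMap hΓ' x') ↔ hΓ'.HeadSide (φ d) x' :=
  (φ.headSide_map_iff_of_sink hΓ' hΓ (φ.exists_sink hΓ' x').choose_spec d).symm

lemma collapseMap_eq_of_sink (hΓ : Γ.IsTree) {x' : V'} {v : V}
    (hv : ∀ d : Γ.Dart, d.fst = v → ¬hΓ'.HeadSide (φ d) x') : φ.collapseMap hΓ' x' = v :=
  hΓ.eq_of_forall_headSide_iff fun d =>
    (φ.headSide_collapseMap_iff hΓ' hΓ x' d).trans (φ.headSide_map_iff_of_sink hΓ' hΓ hv d)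

lemma collapseMap_fst (hΓ : Γ.IsTree) (e : Γ.Dart) : φ.collapseMap hΓ' (φ e).fst = e.fst := by
  refine φ.collapseMap_eq_of_sink hΓ' hΓ fun d hd => ?_
  obtain rfl | hne := eq_or_ne e d
  · exact hΓ'.not_headSide_fst (φ e)
  have hpair := φ.map_alignedPair _ _ (alignedPair_of_snd_eq_fst (d := d.symm) hd hne)
  rw [← hΓ'.headSide_symm_iff, ← φ.map_symm]
  exact hΓ'.headSide_fst_of_alignedPair hpair

lemma collapseMap_snd (hΓ : Γ.IsTree) (e : Γ.Dart) : φ.collapseMap hΓ' (φ e).snd = e.snd := by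
  simpa [φ.map_symm] using φ.collapseMap_fst hΓ' hΓ e.symm

lemma adj_collapseMap (hΓ : Γ.IsTree) {x' y' : V'} (h : Γ'.Adj x' y')
    (hne : φ.collapseMap hΓ' x' ≠ φ.collapseMap hΓ' y') :
    Γ.Adj (φ.collapseMap hΓ' x') (φ.collapseMap hΓ' y') := by
  set p := hΓ.geodesic (φ.collapseMap hΓ' x') (φ.collapseMap hΓ' y')
  have hp : p.IsPath := hΓ.isPath_geodesic _ _
  have hφ : ∀ d ∈ p.darts, φ d = ⟨(x', y'), h⟩ := fun d hd =>
    hΓ'.eq_of_adj_of_not_headSide_of_headSide h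
      ((φ.headSide_collapseMap_iff hΓ' hΓ x' d).not.mp (hΓ.not_headSide_of_mem_darts hp hd))
      ((φ.headSide_collapseMap_iff hΓ' hΓ y' d).mp (hΓ.headSide_of_mem_darts hp hd))
  refine (p.adj_or_exists_sublist_darts hne).resolve_right ?_
  rintro ⟨d₁, d₂, hsub⟩
  exact (φ.map_alignedPair _ _ ⟨_, _, p, hp, hsub⟩).ne
    ((hφ d₁ (hsub.subset (by simp))).trans (hφ d₂ (hsub.subset (by simp))).symm)

lemma collapseMap_eq_of_mem_support (hΓ : Γ.IsTree) {x' y' : V'}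
    (hxy : φ.collapseMap hΓ' x' = φ.collapseMap hΓ' y') {p : Γ'.Walk x' y'} (hp : p.IsPath)
    {w : V'} (hw : w ∈ p.support) : φ.collapseMap hΓ' w = φ.collapseMap hΓ' x' := by
  by_contra hne
  obtain ⟨d, hdx, hdw⟩ := hΓ.exists_headSide_of_ne (Ne.symm hne)
  have hx : hΓ'.HeadSide (φ d.symm) x' := by
    rwa [← φ.headSide_collapseMap_iff hΓ' hΓ, hΓ.headSide_symm_iff]
  have hy : hΓ'.HeadSide (φ d.symm) y' := by
    rwa [← φ.headSide_collapseMap_iff hΓ' hΓ, hΓ.headSide_symm_iff, ← hxy]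
  have hw' := hΓ'.headSide_of_mem_support hx hy hp hw
  rw [← φ.headSide_collapseMap_iff hΓ' hΓ, hΓ.headSide_symm_iff] at hw'
  exact hw' hdw

lemma collapseMap_surjective (hΓ : Γ.IsTree) : Function.Surjective (φ.collapseMap hΓ') := by
  intro v
  by_cases hv : ∃ w, Γ.Adj v w
  · obtain ⟨w, h⟩ := hv
    exact ⟨_, φ.collapseMap_fst hΓ' hΓ ⟨(v, w), h⟩⟩
  · have : ∀ u, u = v := by
      intro u
      obtain ⟨p⟩ := hΓ.connected.preconnected v u
      cases p with
      | nil => rfl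
      | cons h _ => exact absurd ⟨_, h⟩ hv
    exact ⟨hΓ'.connected.nonempty.some, this _⟩

end AlignedDartMap

namespace IsTree

variable {c : V' → V}

lemma fst_eq_of_map_eq (hΓ' : Γ'.IsTree)
    (hfib : ∀ x y, c x = c y → ∀ p : Γ'.Walk x y, p.IsPath → ∀ w ∈ p.support, c w = c x)
    {D E : Γ'.Dart} (hfst : c D.fst = c E.fst) (hsnd : c D.snd = c E.snd)
    (hne : c D.fst ≠ c D.snd) : D.fst = E.fst := by
  set s := hΓ'.geodesic E.snd D.snd
  have hs : ∀ z ∈ s.support, c z = c D.snd := fun z hz =>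
    (hfib _ _ hsnd.symm s (hΓ'.isPath_geodesic _ _) z hz).trans hsnd.symm
  have hq : (Walk.cons E.adj s).IsPath :=
    (hΓ'.isPath_geodesic _ _).cons fun h => hne (hfst.trans (hs _ h))
  by_contra hDE
  have hD : D.fst ∉ (Walk.cons E.adj s).support := by
    rw [Walk.support_cons, List.mem_cons, not_or]
    exact ⟨hDE, fun h => hne (hs _ h)⟩
  have hr := hΓ'.isAcyclic.mem_support_of_ne_mem_support_of_adj_of_isPath
    (hΓ'.isPath_geodesic E.fst D.fst) hq D.adj hD
  exact hne (hfst.trans (hfib _ _ hfst.symm _ (hΓ'.isPath_geodesic _ _) _ hr).symm)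

lemma eq_of_map_eq (hΓ' : Γ'.IsTree)
    (hfib : ∀ x y, c x = c y → ∀ p : Γ'.Walk x y, p.IsPath → ∀ w ∈ p.support, c w = c x)
    {D E : Γ'.Dart} (hfst : c D.fst = c E.fst) (hsnd : c D.snd = c E.snd)
    (hne : c D.fst ≠ c D.snd) : D = E := by
  have h₁ := hΓ'.fst_eq_of_map_eq hfib hfst hsnd hne
  have h₂ := hΓ'.fst_eq_of_map_eq hfib (D := D.symm) (E := E.symm) hsnd hfst hne.symm
  ext <;> assumption

/-- The invariant on `q.support.tail` (only the start of `q` lies over `u`) is what keeps the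
lifted walk a path. -/
lemma exists_lift_isPath (hΓ' : Γ'.IsTree) (hsurj : Function.Surjective c)
    (hfib : ∀ x y, c x = c y → ∀ p : Γ'.Walk x y, p.IsPath → ∀ w ∈ p.support, c w = c x)
    (φ : Γ.Dart → Γ'.Dart) (hφ : ∀ d, c (φ d).fst = d.fst ∧ c (φ d).snd = d.snd)
    {u v : V} {p : Γ.Walk u v} (hp : p.IsPath) :
    ∃ (x y : V') (q : Γ'.Walk x y), q.IsPath ∧ c x = u ∧
      (∀ z ∈ q.support.tail, c z ∈ p.support.tail) ∧ (p.darts.map φ).Sublist q.darts := by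
  induction p with
  | nil =>
    obtain ⟨x, hx⟩ := hsurj _
    exact ⟨x, x, .nil, .nil, hx, by simp, by simp⟩
  | @cons u w v h p ih =>
    obtain ⟨hp', hu⟩ := (Walk.cons_isPath_iff h p).mp hp
    obtain ⟨x, y, q, hq, hx, htail, hsub⟩ := ih hp'
    set D := φ ⟨(u, w), h⟩
    obtain ⟨hD₁, hD₂⟩ : c D.fst = u ∧ c D.snd = w := hφ _
    set r := hΓ'.geodesic D.snd x
    have hr : ∀ z ∈ r.support, c z = w := fun z hz =>
      (hfib _ _ (hD₂.trans hx.symm) r (hΓ'.isPath_geodesic _ _) z hz).trans hD₂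
    have hw : w ∉ p.support.tail := by
      have := hp'.support_nodup
      rw [← p.cons_tail_support, List.nodup_cons] at this
      exact this.1
    have hmem : ∀ z ∈ (r.append q).support, c z = w ∨ c z ∈ p.support.tail := by
      intro z hz
      rw [Walk.support_append, List.mem_append] at hz
      exact hz.imp (hr z) (htail z)
    have hrq : (r.append q).IsPath := by
      rw [Walk.isPath_def, Walk.support_append, List.nodup_append]
      refine ⟨(hΓ'.isPath_geodesic _ _).support_nodup,
        hq.support_nodup.sublist (List.tail_sublist _), ?_⟩
      rintro z hz _ hz' rfl
      exact hw (by simpa only [hr z hz] using htail z hz')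
    have hD : D.fst ∉ (r.append q).support := fun hz => by
      rcases hmem _ hz with h' | h'
      · exact h.ne (hD₁.symm.trans h')
      · exact hu (hD₁ ▸ List.mem_of_mem_tail h')
    refine ⟨D.fst, y, .cons D.adj (r.append q), hrq.cons hD, hD₁, ?_, ?_⟩
    · intro z hz
      rw [Walk.support_cons, List.tail_cons] at hz ⊢
      rcases hmem z hz with h' | h'
      · exact h' ▸ p.start_mem_support
      · exact List.mem_of_mem_tail h'
    · rw [Walk.darts_cons, Walk.darts_cons, List.map_cons, Walk.darts_append]
      exact (hsub.trans (List.sublist_append_right _ _)).cons_cons _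

end IsTree

end SimpleGraph

open SimpleGraph

namespace GTree

variable {G : Type u} [Group G]

instance (T : GTree G) : Nonempty T.V := T.nonempty

def actHom (T : GTree G) (g : G) : T.graph →g T.graph := ⟨T.act g, T.adj_act g _ _⟩

lemma headSide_dartAct_iff (T : GTree G) (g : G) (d : T.graph.Dart) (x : T.V) :
    T.isTree.HeadSide (T.dartAct g d) (T.act g x) ↔ T.isTree.HeadSide d x :=
  T.isTree.headSide_mapDart_iff T.isTree (T.actHom g) (T.act g).injective d x

lemma dartAct_surjective (T : GTree G) (g : G) : Function.Surjective (T.dartAct g) :=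
  fun d => ⟨T.dartAct g⁻¹ d, by ext <;> simp [dartAct]⟩

/-- If no vertex had two distinct neighbours, `T` would be the single edge `ab`, and, as there
are no inversions, `{a}` would be a proper invariant subtree. -/
lemma exists_adj_adj_ne_of_adj (T : GTree G) {a b : T.V} (hab : T.graph.Adj a b) :
    ∃ v w₁ w₂ : T.V, T.graph.Adj v w₁ ∧ T.graph.Adj v w₂ ∧ w₁ ≠ w₂ := by
  by_contra! huniq
  have hab' : ∀ v, v = a ∨ v = b := by
    intro v
    by_contra! hv
    have hnil : ¬(T.isTree.geodesic b v).Nil := Walk.not_nil_of_ne hv.2.symm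
    have hsnd : (T.isTree.geodesic b v).snd = a := huniq b _ _ (Walk.adj_snd hnil) hab.symm
    obtain ⟨w₁, w₂, h₁, h₂, hne⟩ :=
      Walk.exists_adj_adj_ne_of_mem_support (T.isTree.isPath_geodesic b v)
        (hsnd ▸ List.mem_of_mem_tail (Walk.snd_mem_tail_support hnil)) hab.ne hv.1.symm
    exact hne (huniq a w₁ w₂ h₁ h₂)
  have hfix : ∀ g : G, T.act g a = a := by
    intro g
    refine (hab' _).resolve_right fun hga => ?_
    rcases hab' (T.act g b) with hgb | hgb
    · exact T.noInversion g a b hab ⟨hga, hgb⟩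
    · exact hab.ne ((T.act g).injective (hga.trans hgb.symm))
  have hmin := T.minimal {a} ⟨a, rfl⟩ (fun g v hv => by rw [hv, hfix g]; rfl)
    (fun u hu v hv p hp w hw => by
      subst hu hv
      rw [Walk.nil_iff_support_eq.mp (Walk.isPath_iff_nil.mp hp)] at hw
      simpa using hw)
  exact hab.ne' (Set.eq_univ_iff_forall.mp hmin b)

lemma exists_adj_adj_ne (T : GTree G) {a b : T.V} (hab : T.graph.Adj a b) (v : T.V) :
    ∃ w₁ w₂ : T.V, T.graph.Adj v w₁ ∧ T.graph.Adj v w₂ ∧ w₁ ≠ w₂ := by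
  have hmin := T.minimal {v | ∃ w₁ w₂, T.graph.Adj v w₁ ∧ T.graph.Adj v w₂ ∧ w₁ ≠ w₂}
    (T.exists_adj_adj_ne_of_adj hab)
    (fun g v ⟨w₁, w₂, h₁, h₂, hne⟩ => ⟨T.act g w₁, T.act g w₂, T.adj_act g _ _ h₁,
      T.adj_act g _ _ h₂, fun h => hne ((T.act g).injective h)⟩)
    (fun u hu v hv p hp w hw => by
      by_cases hwu : w = u
      · exact hwu ▸ hu
      by_cases hwv : w = v
      · exact hwv ▸ hv
      exact Walk.exists_adj_adj_ne_of_mem_support hp hw hwu hwv)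
  exact Set.eq_univ_iff_forall.mp hmin v

lemma exists_isPath_concat (T : GTree G) {a b : T.V} (hab : T.graph.Adj a b) {x y : T.V}
    {p : T.graph.Walk x y} (hp : p.IsPath) :
    ∃ (z : T.V) (h : T.graph.Adj y z), (p.concat h).IsPath := by
  obtain ⟨w₁, w₂, h₁, h₂, hne⟩ := T.exists_adj_adj_ne hab y
  by_cases hw₁ : w₁ ∈ p.support
  · refine ⟨w₂, h₂, hp.concat (fun hw₂ => hne ?_) h₂⟩
    exact (T.isTree.isAcyclic.eq_penultimate_of_adj_end hp h₁ hw₁).trans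
      (T.isTree.isAcyclic.eq_penultimate_of_adj_end hp h₂ hw₂).symm
  · exact ⟨w₁, h₁, hp.concat hw₁ h₁⟩

lemma alignedPair_map_of_aligned {T T' : GTree G} (φ : T.graph.Dart → T'.graph.Dart)
    (halign : ∀ d₁ d₂ d₃, T.Aligned d₁ d₂ d₃ → T'.Aligned (φ d₁) (φ d₂) (φ d₃))
    {d₁ d₂ : T.graph.Dart} (h : AlignedPair d₁ d₂) : AlignedPair (φ d₁) (φ d₂) := by
  obtain ⟨a, b, p, hp, hsub⟩ := h
  obtain ⟨z, hz, hpz⟩ := T.exists_isPath_concat d₁.adj hp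
  have hsub' : [d₁, d₂, ⟨(b, z), hz⟩].Sublist (p.concat hz).darts := by
    rw [Walk.darts_concat, List.concat_eq_append]
    exact hsub.append (List.Sublist.refl _)
  obtain ⟨x, y, q, hq, hsubq⟩ := halign _ _ _ ⟨a, z, _, hpz, hsub'⟩
  exact ⟨x, y, q, hq, (List.sublist_append_left [φ d₁, φ d₂] _).trans hsubq⟩

lemma collapseMap_act {T T' : GTree G} (φ : AlignedDartMap T.graph T'.graph)
    (hφ : ∀ (g : G) (d : T.graph.Dart), φ (T.dartAct g d) = T'.dartAct g (φ d)) (g : G)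
    (x' : T'.V) :
    φ.collapseMap T'.isTree (T'.act g x') = T.act g (φ.collapseMap T'.isTree x') := by
  refine T.isTree.eq_of_forall_headSide_iff fun d => ?_
  obtain ⟨e, rfl⟩ := T.dartAct_surjective g d
  rw [φ.headSide_collapseMap_iff T'.isTree T.isTree, hφ, T'.headSide_dartAct_iff,
    T.headSide_dartAct_iff, φ.headSide_collapseMap_iff T'.isTree T.isTree]

lemma exists_dartMap_of_collapseOf {T T' : GTree G} (h : CollapseOf T T') :
    ∃ φ : T.graph.Dart → T'.graph.Dart, Function.Injective φ ∧
      (∀ (g : G) (d : T.graph.Dart), φ (T.dartAct g d) = T'.dartAct g (φ d)) ∧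
      (∀ d : T.graph.Dart, φ d.symm = (φ d).symm) ∧
      (∀ d₁ d₂ d₃ : T.graph.Dart, T.Aligned d₁ d₂ d₃ → T'.Aligned (φ d₁) (φ d₂) (φ d₃)) := by
  obtain ⟨c, hequi, hsurj, -, hlift, hfib⟩ := h
  have : ∀ d : T.graph.Dart, ∃ D : T'.graph.Dart, c D.fst = d.fst ∧ c D.snd = d.snd := by
    intro d
    obtain ⟨x, y, hxy, hx, hy⟩ := hlift _ _ d.adj
    exact ⟨⟨(x, y), hxy⟩, hx, hy⟩
  choose φ hφ using this
  have hφ_unique : ∀ d D, c D.fst = d.fst → c D.snd = d.snd → D = φ d := fun d D h₁ h₂ =>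
    T'.isTree.eq_of_map_eq hfib (h₁.trans (hφ d).1.symm) (h₂.trans (hφ d).2.symm)
      (h₁ ▸ h₂ ▸ d.adj.ne)
  refine ⟨φ, fun d e hde => ?_, fun g d => ?_, fun d => ?_, ?_⟩
  · ext
    · rw [← (hφ d).1, ← (hφ e).1, hde]
    · rw [← (hφ d).2, ← (hφ e).2, hde]
  · refine (hφ_unique _ _ ?_ ?_).symm
    · exact (hequi g _).trans (congrArg (T.act g) (hφ d).1)
    · exact (hequi g _).trans (congrArg (T.act g) (hφ d).2)
  · exact (hφ_unique _ _ (hφ d).2 (hφ d).1).symm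
  · rintro d₁ d₂ d₃ ⟨u, v, p, hp, hsub⟩
    obtain ⟨x, y, q, hq, -, -, hsubq⟩ := T'.isTree.exists_lift_isPath hsurj hfib φ hφ hp
    exact ⟨x, y, q, hq, (hsub.map φ).trans hsubq⟩

lemma collapseOf_of_dartMap {T T' : GTree G} (φ : T.graph.Dart → T'.graph.Dart)
    (hequi : ∀ (g : G) (d : T.graph.Dart), φ (T.dartAct g d) = T'.dartAct g (φ d))
    (hsymm : ∀ d : T.graph.Dart, φ d.symm = (φ d).symm)
    (halign : ∀ d₁ d₂ d₃ : T.graph.Dart, T.Aligned d₁ d₂ d₃ → T'.Aligned (φ d₁) (φ d₂) (φ d₃)) :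
    CollapseOf T T' := by
  let ψ : AlignedDartMap T.graph T'.graph :=
    ⟨φ, hsymm, fun _ _ => alignedPair_map_of_aligned φ halign⟩
  refine ⟨ψ.collapseMap T'.isTree, collapseMap_act ψ hequi,
    ψ.collapseMap_surjective T'.isTree T.isTree,
    fun x y h hne => ψ.adj_collapseMap T'.isTree T.isTree h hne,
    fun u v h => ⟨_, _, (ψ ⟨(u, v), h⟩).adj, ψ.collapseMap_fst T'.isTree T.isTree _,
      ψ.collapseMap_snd T'.isTree T.isTree _⟩,
    fun x y hxy p hp w hw => ψ.collapseMap_eq_of_mem_support T'.isTree T.isTree hxy hp hw⟩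

end GTree

theorem statement_9_general {G : Type u} [Group G] (T T' : GTree G) :
    CollapseOf T T' ↔
      ∃ φ : T.graph.Dart → T'.graph.Dart, Function.Injective φ ∧
        (∀ (g : G) (d : T.graph.Dart), φ (T.dartAct g d) = T'.dartAct g (φ d)) ∧
        (∀ d : T.graph.Dart, φ d.symm = (φ d).symm) ∧
        (∀ d₁ d₂ d₃ : T.graph.Dart, T.Aligned d₁ d₂ d₃ →
          T'.Aligned (φ d₁) (φ d₂) (φ d₃)) :=
  ⟨GTree.exists_dartMap_of_collapseOf,
    fun ⟨φ, _, hequi, hsymm, halign⟩ => GTree.collapseOf_of_dartMap φ hequi hsymm halign⟩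

/-- **Lemma (Guirardel–Levitt, Lemma 5.7).** Let `T, T'` be simplicial `G`-trees.  Then
`T` is a (possibly non-elementary) collapse of `T'` if and only if there is an
equivariant injection `φ : E(T) ↪ E(T')` of oriented edge sets, commuting with edge
reversal and preserving alignment. -/
theorem statement_9 {G : Type u} [Group G] [Group.FG G] (T T' : GTree G) :
    CollapseOf T T' ↔
      ∃ φ : T.graph.Dart → T'.graph.Dart, Function.Injective φ ∧
        (∀ (g : G) (d : T.graph.Dart), φ (T.dartAct g d) = T'.dartAct g (φ d)) ∧
        (∀ d : T.graph.Dart, φ d.symm = (φ d).symm) ∧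
        (∀ d₁ d₂ d₃ : T.graph.Dart, T.Aligned d₁ d₂ d₃ →
          T'.Aligned (φ d₁) (φ d₂) (φ d₃)) :=
  statement_9_general T T'
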